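/- arXiv:1704.02369 — 3 statements merged into one kernel-verified Lean document; each statement's English description precedes it below -/
import Mathlib

section
/- Let S be a finite state space, A an S×S real rate matrix with exit rates A_s = -A_{ss}, k₁ > 1, and Ω > 0 with Ω ≥ k₁·max_s A_s. Let B = I + (1/Ω)·A, let π₀ be a probability vector on S, and let n ≥ 1. Let the prior on paths v = (v₀,…,v_n) ∈ S^{n+1} be the Markov chain law Prior(v) = π₀(v₀)·∏_{i=0}^{n-1} B_{v_i v_{i+1}}, and let L : S^{n+1} → ℝ be a likelihood with ℓ ≤ L(v) ≤ u for all v, 0 < ℓ ≤ u. Define the posterior Post(v) = Prior(v)·L(v) / Σ_{v'} Prior(v')·L(v'). Then for every index 0 ≤ i ≤ n-1, the posterior probability of a self-transition satisfies Post(V_i = V_{i+1}) = Σ_{v : v_i = v_{i+1}} Post(v) ≥ (ℓ/u)·(1 - 1/k₁) > 0. -/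
/-!
Freezing the `i`-th step of the chain, i.e. replacing its transition matrix `B` by the identity,
gives a weight on paths that is still a Markov chain law of total mass one and that vanishes
unless `v i = v (i + 1)`. On those paths `B (v i) (v i) = 1 - A_s / Ω ≥ 1 - 1 / k₁`, so the prior
mass of a self-transition at step `i` is at least `1 - 1 / k₁`. Since the prior has mass one, the
normalising constant `∑ Prior · L` is at most `u`, while `L ≥ ℓ` on the event; hence the posterior
mass of the event is at least `ℓ / u` times its prior mass.
-/

open Matrix BigOperators

section MarkovPath

variable {S R : Type*} [CommSemiring R] {n : ℕ}

def markovPathWeight (π₀ : S → R) (M : Fin n → Matrix S S R) (v : Fin (n + 1) → S) : R :=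
  π₀ (v 0) * ∏ j, M j (v j.castSucc) (v j.succ)

theorem markovPathWeight_cons (π₀ : S → R) (M : Fin (n + 1) → Matrix S S R) (s : S)
    (w : Fin (n + 1) → S) :
    markovPathWeight π₀ M (Fin.cons s w) =
      π₀ s * markovPathWeight (M 0 s) (Fin.tail M) w := by
  simp only [markovPathWeight, Fin.prod_univ_succ, Fin.cons_zero, Fin.castSucc_zero,
    Fin.cons_succ, ← Fin.succ_castSucc, Fin.tail]

theorem sum_markovPathWeight_of_sum_row_eq_one [Fintype S] (π₀ : S → R)
    (M : Fin n → Matrix S S R) (hM : ∀ j s, ∑ t, M j s t = 1) :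
    ∑ v, markovPathWeight π₀ M v = ∑ s, π₀ s := by
  induction n generalizing π₀ with
  | zero =>
    simp only [markovPathWeight, Finset.univ_eq_empty, Finset.prod_empty, mul_one]
    exact Fintype.sum_equiv (Equiv.funUnique (Fin 1) S) _ _ fun _ => rfl
  | succ n ih =>
    rw [← Fintype.sum_equiv (Fin.consEquiv fun _ => S) (fun p => markovPathWeight π₀ M
      (Fin.cons p.1 p.2)) _ fun _ => rfl, Fintype.sum_prod_type]
    refine Finset.sum_congr rfl fun s _ => ?_
    simp only [markovPathWeight_cons]
    rw [← Finset.mul_sum, ih (M 0 s) (Fin.tail M) fun j => hM j.succ, hM, mul_one]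

theorem markovPathWeight_nonneg [PartialOrder R] [IsOrderedRing R] {π₀ : S → R}
    (hπ₀ : ∀ s, 0 ≤ π₀ s) {M : Fin n → Matrix S S R} (hM : ∀ j s t, 0 ≤ M j s t)
    (v : Fin (n + 1) → S) : 0 ≤ markovPathWeight π₀ M v :=
  mul_nonneg (hπ₀ _) (Finset.prod_nonneg fun _ _ => hM _ _ _)

variable [DecidableEq S] [PartialOrder R] [IsOrderedRing R]

theorem mul_markovPathWeight_update_one_le {π₀ : S → R} (hπ₀ : ∀ s, 0 ≤ π₀ s)
    {B : Matrix S S R} (hB : ∀ s t, 0 ≤ B s t) {c : R} (hc : ∀ s, c ≤ B s s) (i : Fin n)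
    {v : Fin (n + 1) → S} (hv : v i.castSucc = v i.succ) :
    c * markovPathWeight π₀ (Function.update (fun _ => B) i 1) v ≤
      markovPathWeight π₀ (fun _ => B) v := by
  have hrest : ∏ j ∈ {i}ᶜ, Function.update (fun _ => B) i 1 j (v j.castSucc) (v j.succ) =
      ∏ j ∈ {i}ᶜ, B (v j.castSucc) (v j.succ) :=
    Finset.prod_congr rfl fun j hj => by
      rw [Function.update_of_ne (Finset.mem_compl.1 hj ∘ Finset.mem_singleton.2)]
  have hP : 0 ≤ π₀ (v 0) * ∏ j ∈ {i}ᶜ, B (v j.castSucc) (v j.succ) :=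
    mul_nonneg (hπ₀ _) (Finset.prod_nonneg fun _ _ => hB _ _)
  simp only [markovPathWeight, Fintype.prod_eq_mul_prod_compl i, hrest, Function.update_self,
    hv, Matrix.one_apply_eq]
  calc c * (π₀ (v 0) * (1 * ∏ j ∈ {i}ᶜ, B (v j.castSucc) (v j.succ)))
      = (π₀ (v 0) * ∏ j ∈ {i}ᶜ, B (v j.castSucc) (v j.succ)) * c := by ring
    _ ≤ (π₀ (v 0) * ∏ j ∈ {i}ᶜ, B (v j.castSucc) (v j.succ)) * B (v i.succ) (v i.succ) :=
      mul_le_mul_of_nonneg_left (hc _) hP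
    _ = _ := by ring

theorem mul_sum_le_sum_markovPathWeight_self_transition [Fintype S] {π₀ : S → R}
    (hπ₀ : ∀ s, 0 ≤ π₀ s) {B : Matrix S S R} (hB : ∀ s t, 0 ≤ B s t)
    (hBrow : ∀ s, ∑ t, B s t = 1) {c : R} (hc : ∀ s, c ≤ B s s) (i : Fin n) :
    c * ∑ s, π₀ s ≤ ∑ v ∈ Finset.univ.filter (fun v : Fin (n + 1) → S => v i.castSucc = v i.succ),
      markovPathWeight π₀ (fun _ => B) v := by
  set M : Fin n → Matrix S S R := Function.update (fun _ => B) i 1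
  have hMrow : ∀ j s, ∑ t, M j s t = 1 := by
    intro j s
    rcases eq_or_ne j i with rfl | hj
    · simp [M, Matrix.one_apply]
    · simp only [M, Function.update_of_ne hj, hBrow]
  have hM_off : ∀ v, markovPathWeight π₀ M v ≠ 0 → v i.castSucc = v i.succ := by
    intro v hv
    by_contra hne
    refine hv (mul_eq_zero_of_right _ (Finset.prod_eq_zero (Finset.mem_univ i) ?_))
    simp [M, Matrix.one_apply_ne hne]
  rw [← sum_markovPathWeight_of_sum_row_eq_one π₀ M hMrow,
    ← Finset.sum_filter_of_ne fun v _ => hM_off v, Finset.mul_sum]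
  exact Finset.sum_le_sum fun v hv =>
    mul_markovPathWeight_update_one_le hπ₀ hB hc i (Finset.mem_filter.1 hv).2

end MarkovPath

section Uniformization

variable {S R : Type*} [DecidableEq S] [Field R]

def uniformization (A : Matrix S S R) (Ω : R) : Matrix S S R := 1 + Ω⁻¹ • A

variable {A : Matrix S S R} {Ω : R}

theorem sum_uniformization_apply [Fintype S] (hA : ∀ s, ∑ t, A s t = 0) (s : S) :
    ∑ t, uniformization A Ω s t = 1 := by
  simp [uniformization, Finset.sum_add_distrib, ← Finset.mul_sum, hA, Matrix.one_apply]

variable [LinearOrder R] [IsStrictOrderedRing R]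

theorem uniformization_apply_nonneg_of_ne (hΩ : 0 ≤ Ω) {s t : S} (hst : s ≠ t)
    (hA : 0 ≤ A s t) : 0 ≤ uniformization A Ω s t := by
  simpa [uniformization, Matrix.one_apply_ne hst] using mul_nonneg (inv_nonneg.2 hΩ) hA

theorem one_sub_one_div_le_uniformization_apply_self {k : R} (hk : 0 < k) (hΩ : 0 < Ω) {s : S}
    (hks : k * -A s s ≤ Ω) : 1 - 1 / k ≤ uniformization A Ω s s := by
  have : Ω⁻¹ * -A s s ≤ 1 / k := by
    rw [inv_mul_eq_div, div_le_div_iff₀ hΩ hk]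
    linarith
  simp only [uniformization, Matrix.add_apply, Matrix.one_apply_eq, Matrix.smul_apply,
    smul_eq_mul]
  linarith

end Uniformization

theorem div_mul_sum_le_sum_mul_div_sum {α R : Type*} [Fintype α] [Field R] [LinearOrder R]
    [IsStrictOrderedRing R] {p L : α → R} (hp : ∀ v, 0 ≤ p v) (hp1 : ∑ v, p v = 1) {ℓ u : R}
    (hℓ : 0 < ℓ) (hL : ∀ v, ℓ ≤ L v ∧ L v ≤ u) (E : Finset α) :
    ℓ / u * ∑ v ∈ E, p v ≤ ∑ v ∈ E, p v * L v / ∑ w, p w * L w := by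
  have hZu : ∑ w, p w * L w ≤ u := calc
    ∑ w, p w * L w ≤ ∑ w, p w * u :=
      Finset.sum_le_sum fun w _ => mul_le_mul_of_nonneg_left (hL w).2 (hp w)
    _ = u := by rw [← Finset.sum_mul, hp1, one_mul]
  have hℓZ : ℓ ≤ ∑ w, p w * L w := calc
    ℓ = ∑ w, p w * ℓ := by rw [← Finset.sum_mul, hp1, one_mul]
    _ ≤ ∑ w, p w * L w :=
      Finset.sum_le_sum fun w _ => mul_le_mul_of_nonneg_left (hL w).1 (hp w)
  have hE : ℓ * ∑ v ∈ E, p v ≤ ∑ v ∈ E, p v * L v := by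
    rw [Finset.mul_sum]
    exact Finset.sum_le_sum fun v _ => by
      rw [mul_comm]
      exact mul_le_mul_of_nonneg_left (hL v).1 (hp v)
  rw [← Finset.sum_div, div_mul_eq_mul_div]
  exact div_le_div₀ ((mul_nonneg hℓ.le (Finset.sum_nonneg fun v _ => hp v)).trans hE) hE
    (hℓ.trans_le hℓZ) hZu

theorem posterior_self_transition_lower_bound_general
    {S : Type*} [Fintype S] [DecidableEq S]
    (A : Matrix S S ℝ)
    (hoff : ∀ s t, s ≠ t → 0 ≤ A s t) (hrow : ∀ s, ∑ t, A s t = 0)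
    (k₁ Ω : ℝ) (hk₁ : 1 < k₁) (hΩ : 0 < Ω) (hΩmax : ∀ s, k₁ * (-A s s) ≤ Ω)
    (B : Matrix S S ℝ) (hB : B = 1 + Ω⁻¹ • A)
    (π₀ : S → ℝ) (hπ₀ : ∀ s, 0 ≤ π₀ s) (hπ₀1 : ∑ s, π₀ s = 1)
    (n : ℕ)
    (Prior : (Fin (n + 1) → S) → ℝ)
    (hPrior : ∀ v, Prior v = π₀ (v 0) * ∏ i : Fin n, B (v i.castSucc) (v i.succ))
    (L : (Fin (n + 1) → S) → ℝ) (ℓ u : ℝ) (hℓ : 0 < ℓ) (hℓu : ℓ ≤ u)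
    (hL : ∀ v, ℓ ≤ L v ∧ L v ≤ u)
    (Post : (Fin (n + 1) → S) → ℝ)
    (hPost : ∀ v, Post v = Prior v * L v / ∑ v', Prior v' * L v') :
    ∀ i : Fin n,
      ℓ / u * (1 - 1 / k₁) ≤
        ∑ v ∈ Finset.univ.filter (fun v : Fin (n + 1) → S => v i.castSucc = v i.succ), Post v
      ∧ 0 < ℓ / u * (1 - 1 / k₁) := by
  intro i
  have hu : 0 < u := hℓ.trans_le hℓu
  obtain rfl : B = uniformization A Ω := hB
  obtain rfl : Prior = markovPathWeight π₀ (fun _ => uniformization A Ω) := funext hPrior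
  have hk : 0 < 1 - 1 / k₁ := by
    rw [sub_pos, div_lt_one (zero_lt_one.trans hk₁)]
    exact hk₁
  have hdiag : ∀ s, 1 - 1 / k₁ ≤ uniformization A Ω s s := fun s =>
    one_sub_one_div_le_uniformization_apply_self (zero_lt_one.trans hk₁) hΩ (hΩmax s)
  have hBnn : ∀ s t, 0 ≤ uniformization A Ω s t := by
    intro s t
    rcases eq_or_ne s t with rfl | hst
    · exact hk.le.trans (hdiag s)
    · exact uniformization_apply_nonneg_of_ne hΩ.le hst (hoff s t hst)
  have hself := mul_sum_le_sum_markovPathWeight_self_transition hπ₀ hBnn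
    (sum_uniformization_apply hrow) hdiag i
  rw [hπ₀1, mul_one] at hself
  have hmass :
      ∑ v : Fin (n + 1) → S, markovPathWeight π₀ (fun _ => uniformization A Ω) v = 1 := by
    rw [sum_markovPathWeight_of_sum_row_eq_one _ _ fun _ => sum_uniformization_apply hrow, hπ₀1]
  have hposterior := div_mul_sum_le_sum_mul_div_sum (markovPathWeight_nonneg hπ₀ fun _ => hBnn)
    hmass hℓ hL (Finset.univ.filter fun v : Fin (n + 1) → S => v i.castSucc = v i.succ)
  refine ⟨?_, by positivity⟩
  simp only [hPost]
  exact (mul_le_mul_of_nonneg_left hself (by positivity)).trans hposterior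

/-- **Proposition 2 of the paper.** Let `A` be a rate matrix on a finite state
space `S` with exit rates `A_s = -A s s`, `k₁ > 1`, and `Ω > 0` with `Ω ≥ k₁·A_s` for every
`s` (i.e. `Ω ≥ k₁·max_s A_s`). Let `B = I + Ω⁻¹ • A`, `π₀` a probability vector, `n ≥ 1`,
`Prior(v) = π₀(v₀)·∏ᵢ B_{vᵢ v_{i+1}}` the Markov prior over paths `v : Fin (n+1) → S`, and
`L` a likelihood bounded in `[ℓ,u]` with `0 < ℓ ≤ u`; let `Post` be the corresponding
posterior. Then the posterior probability of a self-transition at any step `i` is at least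
`(ℓ/u)·(1 - 1/k₁) > 0`. -/
theorem posterior_self_transition_lower_bound
    {S : Type*} [Fintype S] [DecidableEq S] [Nonempty S]
    (A : Matrix S S ℝ)
    (hoff : ∀ s t, s ≠ t → 0 ≤ A s t) (hrow : ∀ s, ∑ t, A s t = 0)
    (k₁ Ω : ℝ) (hk₁ : 1 < k₁) (hΩ : 0 < Ω) (hΩmax : ∀ s, k₁ * (-A s s) ≤ Ω)
    (B : Matrix S S ℝ) (hB : B = 1 + Ω⁻¹ • A)
    (π₀ : S → ℝ) (hπ₀ : ∀ s, 0 ≤ π₀ s) (hπ₀1 : ∑ s, π₀ s = 1)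
    (n : ℕ) (hn : 1 ≤ n)
    (Prior : (Fin (n + 1) → S) → ℝ)
    (hPrior : ∀ v, Prior v = π₀ (v 0) * ∏ i : Fin n, B (v i.castSucc) (v i.succ))
    (L : (Fin (n + 1) → S) → ℝ) (ℓ u : ℝ) (hℓ : 0 < ℓ) (hℓu : ℓ ≤ u)
    (hL : ∀ v, ℓ ≤ L v ∧ L v ≤ u)
    (Post : (Fin (n + 1) → S) → ℝ)
    (hPost : ∀ v, Post v = Prior v * L v / ∑ v', Prior v' * L v') :
    ∀ i : Fin n,
      ℓ / u * (1 - 1 / k₁) ≤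
        ∑ v ∈ Finset.univ.filter (fun v : Fin (n + 1) → S => v i.castSucc = v i.succ), Post v
      ∧ 0 < ℓ / u * (1 - 1 / k₁) :=
  posterior_self_transition_lower_bound_general A hoff hrow k₁ Ω hk₁ hΩ hΩmax B hB π₀ hπ₀ hπ₀1 n
    Prior hPrior L ℓ u hℓ hℓu hL Post hPost
end

section
/- Let S be a finite state space, A an S×S real rate matrix with exit rates A_s = -A_{ss}, k₁ > 1, and Ω > 0 with Ω ≥ k₁·max_s A_s. Let B = I + (1/Ω)·A, π₀ a probability vector on S, n ≥ 1, Prior(v) = π₀(v₀)·∏_{i=0}^{n-1} B_{v_i v_{i+1}} for v ∈ S^{n+1}, and L : S^{n+1} → [ℓ,u] with 0 < ℓ ≤ u; set Post(v) = Prior(v)·L(v)/Σ_{v'} Prior(v')·L(v'). Then for every index 0 ≤ i ≤ n-1 and every state s ∈ S, Post(V_i = s and V_{i+1} = s) ≥ (ℓ/u)·(1 - 1/k₁)·Post(V_i = s); i.e., conditioned on the data and on being in state s at step i, the chain stays in s at step i+1 with posterior probability at least δ₁ = (ℓ/u)(1 - 1/k₁). -/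
/-!
By the Markov property, the prior probability of `{Vᵢ = s, Vᵢ₊₁ = s}` is exactly `B s s` times
that of `{Vᵢ = s}`, and uniformization with `Ω ≥ k₁ · max A_s` makes
`B s s = 1 - A_s / Ω ≥ 1 - 1/k₁`. Reweighting by a likelihood with values in `[ℓ, u]` multiplies
the probability of every event by a factor between `ℓ / D` and `u / D`, `D` the normalizing
constant, so the prior inequality passes to the posterior at the cost of the factor `ℓ / u`.
-/

open Matrix BigOperators

section Uniformization

variable {S : Type*} [DecidableEq S] (A : Matrix S S ℝ) (Ω : ℝ)

theorem sum_one_add_smul_apply_of_sum_eq_zero [Fintype S] (hrow : ∀ s, ∑ t, A s t = 0) (s : S) :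
    ∑ t, (1 + Ω⁻¹ • A) s t = 1 := by
  simp [Finset.sum_add_distrib, ← Finset.mul_sum, hrow, Matrix.one_apply]

theorem one_sub_one_div_le_one_add_smul_apply_self {k₁ : ℝ} (hk₁ : 0 < k₁) (hΩ : 0 < Ω)
    {s : S} (hs : k₁ * (-A s s) ≤ Ω) : 1 - 1 / k₁ ≤ (1 + Ω⁻¹ • A) s s := by
  have : Ω⁻¹ * -A s s ≤ 1 / k₁ := by
    rw [inv_mul_eq_div, div_le_div_iff₀ hΩ hk₁]; linarith
  simp only [Matrix.add_apply, one_apply_eq, Matrix.smul_apply, smul_eq_mul]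
  linarith

theorem one_add_smul_nonneg (hoff : ∀ s t, s ≠ t → 0 ≤ A s t) {k₁ : ℝ} (hk₁ : 1 < k₁)
    (hΩ : 0 < Ω) (hΩmax : ∀ s, k₁ * (-A s s) ≤ Ω) (s t : S) : 0 ≤ (1 + Ω⁻¹ • A) s t := by
  rcases eq_or_ne s t with rfl | hst
  · have := one_sub_one_div_le_one_add_smul_apply_self A Ω (by linarith) hΩ (hΩmax s)
    have : 1 / k₁ < 1 := (div_lt_one (by linarith)).2 hk₁
    linarith
  · simpa [one_apply_ne hst] using mul_nonneg (inv_nonneg.2 hΩ.le) (hoff s t hst)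

end Uniformization

section MarkovWeight

variable {S : Type*} (π₀ : S → ℝ) (B : Matrix S S ℝ)

def markovWeight {n : ℕ} (v : Fin (n + 1) → S) : ℝ :=
  π₀ (v 0) * ∏ i : Fin n, B (v i.castSucc) (v i.succ)

theorem markovWeight_nonneg (hπ₀ : ∀ s, 0 ≤ π₀ s) (hB : ∀ s t, 0 ≤ B s t) {n : ℕ}
    (v : Fin (n + 1) → S) : 0 ≤ markovWeight π₀ B v :=
  mul_nonneg (hπ₀ _) (Finset.prod_nonneg fun _ _ => hB _ _)

theorem markovWeight_snoc {n : ℕ} (w : Fin (n + 1) → S) (a : S) :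
    markovWeight π₀ B (Fin.snoc w a : Fin (n + 2) → S) =
      markovWeight π₀ B w * B (w (Fin.last n)) a := by
  rw [markovWeight, markovWeight, Fin.prod_univ_castSucc, mul_assoc]
  simp only [Fin.succ_castSucc, Fin.snoc_castSucc, Fin.succ_last, Fin.snoc_last]
  rfl

variable [Fintype S]

theorem Fintype.sum_fin_succ_pi_eq_sum_snoc {M : Type*} [AddCommMonoid M] {n : ℕ}
    (F : (Fin (n + 1) → S) → M) :
    ∑ v, F v = ∑ w : Fin n → S, ∑ a : S, F (Fin.snoc w a) := by
  rw [← (Fin.snocEquiv fun _ => S).sum_comp F, Fintype.sum_prod_type, Finset.sum_comm]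
  rfl

theorem sum_markovWeight_mul_comp_castLE (hB : ∀ s, ∑ t, B s t = 1) {m n : ℕ} (hmn : m ≤ n)
    (g : (Fin (m + 1) → S) → ℝ) :
    ∑ v : Fin (n + 1) → S, markovWeight π₀ B v * g (v ∘ Fin.castLE (Nat.succ_le_succ hmn)) =
      ∑ w, markovWeight π₀ B w * g w := by
  induction n, hmn using Nat.le_induction with
  | base => rfl
  | succ n hmn ih =>
    rw [Fintype.sum_fin_succ_pi_eq_sum_snoc, ← ih]
    refine Finset.sum_congr rfl fun w _ => ?_
    have hinit : ∀ a, (Fin.snoc w a : Fin (n + 2) → S) ∘ Fin.castLE (by omega) =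
        w ∘ Fin.castLE (Nat.succ_le_succ hmn) := fun a => by
      funext i
      exact Fin.snoc_castSucc (α := fun _ => S) (i := Fin.castLE _ i) ..
    simp only [hinit, markovWeight_snoc, mul_right_comm _ (B _ _), ← Finset.mul_sum, hB,
      mul_one]

theorem sum_markovWeight_mul_mul_succ (hB : ∀ s, ∑ t, B s t = 1) {n : ℕ} (j : Fin n)
    (f g : S → ℝ) :
    ∑ v : Fin (n + 1) → S, markovWeight π₀ B v * (f (v j.castSucc) * g (v j.succ)) =
      ∑ v : Fin (n + 1) → S,
        markovWeight π₀ B v * (f (v j.castSucc) * (B *ᵥ g) (v j.castSucc)) := by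
  have hpair := sum_markovWeight_mul_comp_castLE π₀ B hB (m := j + 1) j.isLt
    fun w => f (w (Fin.last j).castSucc) * g (w (Fin.last (j + 1)))
  have hsingle := sum_markovWeight_mul_comp_castLE π₀ B hB (m := j) j.is_lt.le
    fun w => f (w (Fin.last j)) * (B *ᵥ g) (w (Fin.last j))
  refine hpair.trans (Eq.trans ?_ hsingle.symm)
  rw [Fintype.sum_fin_succ_pi_eq_sum_snoc]
  refine Finset.sum_congr rfl fun w _ => ?_
  simp only [markovWeight_snoc, Fin.snoc_castSucc, Fin.snoc_last, mulVec, dotProduct,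
    Finset.mul_sum]
  exact Finset.sum_congr rfl fun a _ => by ring

theorem sum_filter_markovWeight_stay_eq [DecidableEq S] (hB : ∀ s, ∑ t, B s t = 1) {n : ℕ}
    (j : Fin n) (s : S) :
    ∑ v ∈ Finset.univ.filter (fun v : Fin (n + 1) → S => v j.castSucc = s ∧ v j.succ = s),
        markovWeight π₀ B v =
      B s s * ∑ v ∈ Finset.univ.filter (fun v : Fin (n + 1) → S => v j.castSucc = s),
        markovWeight π₀ B v := by
  have := sum_markovWeight_mul_mul_succ π₀ B hB j (Pi.single s 1) (Pi.single s 1)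
  simp only [mulVec_single_one, Pi.single_apply] at this
  rw [Finset.sum_filter, Finset.sum_filter, Finset.mul_sum]
  convert this using 1 <;> refine Finset.sum_congr rfl fun v _ => ?_ <;>
    by_cases h : v j.castSucc = s <;> simp [h, mul_comm]

end MarkovWeight

section Posterior

variable {ι : Type*} [Fintype ι]

noncomputable def posterior (p L : ι → ℝ) (v : ι) : ℝ :=
  p v * L v / ∑ v', p v' * L v'

theorem mul_sum_posterior_le_sum_posterior_of_mul_sum_le {p L : ι → ℝ} {ℓ u β : ℝ}
    (hp : ∀ v, 0 ≤ p v) (hL : ∀ v, ℓ ≤ L v ∧ L v ≤ u) (hℓ : 0 ≤ ℓ) (hu : 0 < u) (hβ : 0 ≤ β)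
    {E F : Finset ι} (hEF : β * ∑ v ∈ E, p v ≤ ∑ v ∈ F, p v) :
    ℓ / u * β * ∑ v ∈ E, posterior p L v ≤ ∑ v ∈ F, posterior p L v := by
  have hD : 0 ≤ ∑ v', p v' * L v' :=
    Finset.sum_nonneg fun v _ => mul_nonneg (hp v) (hℓ.trans (hL v).1)
  simp only [posterior, ← Finset.sum_div, mul_div_assoc']
  refine div_le_div_of_nonneg_right ?_ hD
  calc ℓ / u * β * ∑ v ∈ E, p v * L v
      ≤ ℓ / u * β * ∑ v ∈ E, p v * u := by
        gcongr with v; exacts [hp v, (hL v).2]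
    _ = ℓ * (β * ∑ v ∈ E, p v) := by rw [← Finset.sum_mul]; field_simp
    _ ≤ ℓ * ∑ v ∈ F, p v := by gcongr
    _ = ∑ v ∈ F, p v * ℓ := by rw [mul_comm, Finset.sum_mul]
    _ ≤ ∑ v ∈ F, p v * L v := by gcongr with v; exacts [hp v, (hL v).1]

end Posterior

theorem posterior_conditional_self_transition_lower_bound_general
    {S : Type*} [Fintype S] [DecidableEq S]
    (A : Matrix S S ℝ)
    (hoff : ∀ s t, s ≠ t → 0 ≤ A s t) (hrow : ∀ s, ∑ t, A s t = 0)
    (k₁ Ω : ℝ) (hk₁ : 1 < k₁) (hΩ : 0 < Ω) (hΩmax : ∀ s, k₁ * (-A s s) ≤ Ω)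
    (B : Matrix S S ℝ) (hB : B = 1 + Ω⁻¹ • A)
    (π₀ : S → ℝ) (hπ₀ : ∀ s, 0 ≤ π₀ s)
    (n : ℕ)
    (Prior : (Fin (n + 1) → S) → ℝ)
    (hPrior : ∀ v, Prior v = π₀ (v 0) * ∏ i : Fin n, B (v i.castSucc) (v i.succ))
    (L : (Fin (n + 1) → S) → ℝ) (ℓ u : ℝ) (hℓ : 0 < ℓ) (hℓu : ℓ ≤ u)
    (hL : ∀ v, ℓ ≤ L v ∧ L v ≤ u)
    (Post : (Fin (n + 1) → S) → ℝ)
    (hPost : ∀ v, Post v = Prior v * L v / ∑ v', Prior v' * L v') :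
    ∀ (i : Fin n) (s : S),
      ℓ / u * (1 - 1 / k₁) *
          ∑ v ∈ Finset.univ.filter (fun v : Fin (n + 1) → S => v i.castSucc = s), Post v ≤
        ∑ v ∈ Finset.univ.filter
            (fun v : Fin (n + 1) → S => v i.castSucc = s ∧ v i.succ = s), Post v := by
  intro i s
  have hk₁0 : 0 < k₁ := by linarith
  subst hB
  obtain rfl : Prior = markovWeight π₀ (1 + Ω⁻¹ • A) := funext hPrior
  obtain rfl : Post = posterior (markovWeight π₀ (1 + Ω⁻¹ • A)) L := funext hPost
  have hPrior_nonneg : ∀ v : Fin (n + 1) → S, 0 ≤ markovWeight π₀ (1 + Ω⁻¹ • A) v :=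
    markovWeight_nonneg π₀ _ hπ₀ (one_add_smul_nonneg A Ω hoff hk₁ hΩ hΩmax)
  refine mul_sum_posterior_le_sum_posterior_of_mul_sum_le hPrior_nonneg hL hℓ.le
    (hℓ.trans_le hℓu) (sub_nonneg.2 ((div_le_one hk₁0).2 hk₁.le)) ?_
  rw [sum_filter_markovWeight_stay_eq _ _ (sum_one_add_smul_apply_of_sum_eq_zero A Ω hrow)]
  exact mul_le_mul_of_nonneg_right
    (one_sub_one_div_le_one_add_smul_apply_self A Ω hk₁0 hΩ (hΩmax s))
    (Finset.sum_nonneg fun v _ => hPrior_nonneg v)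

/-- **Corollary 2 of the paper.** In the setting of the uniformized Markov
prior over paths with likelihood bounded in `[ℓ,u]`, for every step `i` and state `s`, the
posterior probability of the event `{Vᵢ = s, V_{i+1} = s}` is at least
`δ₁ = (ℓ/u)·(1 - 1/k₁)` times the posterior probability of `{Vᵢ = s}`. -/
theorem posterior_conditional_self_transition_lower_bound
    {S : Type*} [Fintype S] [DecidableEq S] [Nonempty S]
    (A : Matrix S S ℝ)
    (hoff : ∀ s t, s ≠ t → 0 ≤ A s t) (hrow : ∀ s, ∑ t, A s t = 0)
    (k₁ Ω : ℝ) (hk₁ : 1 < k₁) (hΩ : 0 < Ω) (hΩmax : ∀ s, k₁ * (-A s s) ≤ Ω)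
    (B : Matrix S S ℝ) (hB : B = 1 + Ω⁻¹ • A)
    (π₀ : S → ℝ) (hπ₀ : ∀ s, 0 ≤ π₀ s) (hπ₀1 : ∑ s, π₀ s = 1)
    (n : ℕ) (hn : 1 ≤ n)
    (Prior : (Fin (n + 1) → S) → ℝ)
    (hPrior : ∀ v, Prior v = π₀ (v 0) * ∏ i : Fin n, B (v i.castSucc) (v i.succ))
    (L : (Fin (n + 1) → S) → ℝ) (ℓ u : ℝ) (hℓ : 0 < ℓ) (hℓu : ℓ ≤ u)
    (hL : ∀ v, ℓ ≤ L v ∧ L v ≤ u)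
    (Post : (Fin (n + 1) → S) → ℝ)
    (hPost : ∀ v, Post v = Prior v * L v / ∑ v', Prior v' * L v') :
    ∀ (i : Fin n) (s : S),
      ℓ / u * (1 - 1 / k₁) *
          ∑ v ∈ Finset.univ.filter (fun v : Fin (n + 1) → S => v i.castSucc = s), Post v ≤
        ∑ v ∈ Finset.univ.filter
            (fun v : Fin (n + 1) → S => v i.castSucc = s ∧ v i.succ = s), Post v :=
  posterior_conditional_self_transition_lower_bound_general A hoff hrow k₁ Ω hk₁ hΩ hΩmax B hB π₀
    hπ₀ n Prior hPrior L ℓ u hℓ hℓu hL Post hPost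
end

section
/- Let S be a finite state space, A an S×S real rate matrix with exit rates A_s = -A_{ss}, k₁ > 1, and Ω > 0 with Ω ≥ k₁·max_s A_s. Let B = I + (1/Ω)·A, π₀ a probability vector on S, n ≥ 1, Prior(v) = π₀(v₀)·∏_{i=0}^{n-1} B_{v_i v_{i+1}} for v ∈ S^{n+1}, and L : S^{n+1} → [ℓ,u] with 0 < ℓ ≤ u; set Post(v) = Prior(v)·L(v)/Σ_{v'} Prior(v')·L(v') and δ₁ = (ℓ/u)·(1 - 1/k₁). Then the posterior expected number of true transitions satisfies Σ_v Post(v) · #{ i ∈ {0,…,n-1} : v_{i+1} ≠ v_i } ≤ n·(1 - δ₁). -/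
/-!
Since `Ω ≥ k₁ · max_s A_s`, the uniformized matrix `B` is row-stochastic with diagonal entries
at least `1 - 1/k₁`. Replacing the `i`-th factor of the prior by the diagonal of `B` shows that
under the prior each step stays put with probability at least `1 - 1/k₁`. The normalizing
constant lies in `[ℓ, u]`, so the posterior dominates `ℓ/u` times the prior, and each step is a
true transition with posterior probability at most `1 - δ₁`; sum over the `n` steps.
-/

open Matrix BigOperators Finset

section PathWeight

variable {S R : Type*}

def pathWeight [CommSemiring R] {m : ℕ} (π : S → R) (W : Fin m → Matrix S S R)
    (v : Fin (m + 1) → S) : R :=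
  π (v 0) * ∏ j, W j (v j.castSucc) (v j.succ)

theorem pathWeight_nonneg [CommSemiring R] [PartialOrder R] [IsOrderedRing R] {m : ℕ}
    {π : S → R} {W : Fin m → Matrix S S R} (hπ : ∀ s, 0 ≤ π s) (hW : ∀ j s t, 0 ≤ W j s t)
    (v : Fin (m + 1) → S) : 0 ≤ pathWeight π W v :=
  mul_nonneg (hπ _) (prod_nonneg fun j _ => hW j _ _)

variable [Fintype S]

theorem sum_pathWeight_succ [CommSemiring R] {m : ℕ} (π : S → R)
    (W : Fin (m + 1) → Matrix S S R) :
    ∑ v, pathWeight π W v = ∑ w, pathWeight (π ᵥ* W 0) (fun j => W j.succ) w := by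
  rw [← (Fin.consEquiv fun _ => S).sum_comp, Fintype.sum_prod_type, sum_comm]
  refine sum_congr rfl fun w _ => ?_
  simp [pathWeight, Fin.prod_univ_succ, vecMul, dotProduct, sum_mul, mul_assoc]

theorem sum_pathWeight_zero [CommSemiring R] (π : S → R) (W : Fin 0 → Matrix S S R) :
    ∑ v, pathWeight π W v = ∑ s, π s := by
  simpa [pathWeight] using Fintype.sum_equiv (Equiv.funUnique (Fin 1) S) _ _ fun _ => rfl

theorem sum_pathWeight_of_mulVec_one [CommSemiring R] {m : ℕ} (π : S → R)
    (W : Fin m → Matrix S S R) (hW : ∀ j, W j *ᵥ 1 = 1) :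
    ∑ v, pathWeight π W v = ∑ s, π s := by
  induction m generalizing π with
  | zero => exact sum_pathWeight_zero π W
  | succ m ih =>
    rw [sum_pathWeight_succ, ih _ _ fun j => hW j.succ, ← dotProduct_one, ← dotProduct_mulVec,
      hW, dotProduct_one]

theorem prod_mul_sum_le_sum_pathWeight [CommSemiring R] [PartialOrder R] [IsOrderedRing R]
    {m : ℕ} (π : S → R) (W : Fin m → Matrix S S R) (c : Fin m → R) (hπ : ∀ s, 0 ≤ π s)
    (hW : ∀ j s t, 0 ≤ W j s t) (hc₀ : ∀ j, 0 ≤ c j) (hc : ∀ j s, c j ≤ ∑ t, W j s t) :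
    (∏ j, c j) * ∑ s, π s ≤ ∑ v, pathWeight π W v := by
  induction m generalizing π with
  | zero => simp [sum_pathWeight_zero]
  | succ m ih =>
    have hπW : ∀ t, 0 ≤ (π ᵥ* W 0) t := fun t =>
      sum_nonneg fun s _ => mul_nonneg (hπ s) (hW 0 s t)
    have hstep : c 0 * ∑ s, π s ≤ ∑ t, (π ᵥ* W 0) t :=
      calc c 0 * ∑ s, π s = ∑ s, π s * c 0 := by rw [mul_sum]; simp only [mul_comm]
        _ ≤ ∑ s, π s * ∑ t, W 0 s t :=
          sum_le_sum fun s _ => mul_le_mul_of_nonneg_left (hc 0 s) (hπ s)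
        _ = ∑ t, (π ᵥ* W 0) t := by simp only [vecMul, dotProduct, mul_sum]; exact sum_comm
    rw [sum_pathWeight_succ, Fin.prod_univ_succ, mul_comm (c 0), mul_assoc]
    exact (mul_le_mul_of_nonneg_left hstep (prod_nonneg fun j _ => hc₀ j.succ)).trans
      (ih _ (fun j => W j.succ) (fun j => c j.succ) hπW (fun j => hW j.succ)
        (fun j => hc₀ j.succ) fun j => hc j.succ)

theorem sum_filter_pathWeight_eq [CommSemiring R] [DecidableEq S] {m : ℕ} (π : S → R)
    (B : Matrix S S R) (i : Fin m) :
    ∑ v with v i.succ = v i.castSucc, pathWeight π (fun _ => B) v =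
      ∑ v, pathWeight π (Function.update (fun _ => B) i (diagonal B.diag)) v := by
  rw [sum_filter]
  refine sum_congr rfl fun v _ => ?_
  have hrest : ∏ j ∈ {i}ᶜ, Function.update (fun _ => B) i (diagonal B.diag) j
      (v j.castSucc) (v j.succ) = ∏ j ∈ {i}ᶜ, B (v j.castSucc) (v j.succ) :=
    prod_congr rfl fun j hj => by rw [Function.update_of_ne (by simpa using hj)]
  simp only [pathWeight, Fintype.prod_eq_mul_prod_compl i, hrest, Function.update_self,
    diagonal_apply, diag_apply]
  by_cases hstay : v i.succ = v i.castSucc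
  · simp [hstay]
  · simp [hstay, Ne.symm hstay]

theorem mul_sum_le_sum_filter_pathWeight [CommSemiring R] [PartialOrder R] [IsOrderedRing R]
    [DecidableEq S] {m : ℕ} (π : S → R) (B : Matrix S S R) (c : R) (hπ : ∀ s, 0 ≤ π s)
    (hB : B ∈ rowStochastic R S) (hc₀ : 0 ≤ c) (hc : ∀ s, c ≤ B s s) (i : Fin m) :
    c * ∑ s, π s ≤ ∑ v with v i.succ = v i.castSucc, pathWeight π (fun _ => B) v := by
  have hprod : ∏ j, Function.update (fun _ => (1 : R)) i c j = c := by
    simp [prod_update_of_mem]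
  rw [sum_filter_pathWeight_eq, ← hprod]
  have hB₀ s t : 0 ≤ B s t := nonneg_of_mem_rowStochastic hB
  refine prod_mul_sum_le_sum_pathWeight π _ _ hπ (fun j s t => ?_) (fun j => ?_) fun j s => ?_
  all_goals rcases eq_or_ne j i with rfl | hj
  · rw [Function.update_self, diagonal_apply]; split_ifs <;> simp [hB₀]
  · simp [hj, hB₀]
  · simp [hc₀]
  · simp [hj]
  · simp [diagonal_apply, hc]
  · simp [hj, sum_row_of_mem_rowStochastic hB]

end PathWeight

section Uniformization

variable {S 𝕜 : Type*} [DecidableEq S] [Field 𝕜] [LinearOrder 𝕜]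
  [IsStrictOrderedRing 𝕜] (A : Matrix S S 𝕜) {k Ω : 𝕜}

theorem one_sub_one_div_le_uniformization_diag (hk : 0 < k) (hΩ : 0 < Ω) {s : S}
    (hΩs : k * -A s s ≤ Ω) : 1 - 1 / k ≤ (1 + Ω⁻¹ • A) s s := by
  have : Ω⁻¹ * -A s s ≤ 1 / k := by
    rw [inv_mul_le_iff₀ hΩ, mul_one_div, le_div_iff₀ hk]; linarith
  simp only [Matrix.add_apply, one_apply_eq, Matrix.smul_apply, smul_eq_mul]
  linarith

theorem uniformization_mem_rowStochastic [Fintype S] (hoff : ∀ s t, s ≠ t → 0 ≤ A s t)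
    (hrow : ∀ s, ∑ t, A s t = 0) (hk : 1 ≤ k) (hΩ : 0 < Ω) (hΩA : ∀ s, k * -A s s ≤ Ω) :
    1 + Ω⁻¹ • A ∈ rowStochastic 𝕜 S := by
  refine mem_rowStochastic_iff_sum.2 ⟨fun s t => ?_, fun s => ?_⟩
  · rcases eq_or_ne s t with rfl | hst
    · have := one_sub_one_div_le_uniformization_diag A (by linarith) hΩ (hΩA s)
      have : 1 / k ≤ 1 := (div_le_one (by linarith)).2 hk
      linarith
    · simpa [hst] using mul_nonneg (inv_nonneg.2 hΩ.le) (hoff s t hst)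
  · simp [one_apply, sum_add_distrib, ← mul_sum, hrow]

end Uniformization

section Reweighting

variable {α : Type*} [Fintype α] (p L : α → ℝ) {ℓ u : ℝ}

theorem le_sum_mul_of_le (hp : ∀ a, 0 ≤ p a) (hp1 : ∑ a, p a = 1) (hL : ∀ a, ℓ ≤ L a) :
    ℓ ≤ ∑ a, p a * L a := by
  have := sum_le_sum fun a (_ : a ∈ univ) => mul_le_mul_of_nonneg_left (hL a) (hp a)
  rwa [← sum_mul, hp1, one_mul] at this

theorem sum_mul_le_of_le (hp : ∀ a, 0 ≤ p a) (hp1 : ∑ a, p a = 1) (hL : ∀ a, L a ≤ u) :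
    ∑ a, p a * L a ≤ u := by
  have := sum_le_sum fun a (_ : a ∈ univ) => mul_le_mul_of_nonneg_left (hL a) (hp a)
  rwa [← sum_mul, hp1, one_mul] at this

theorem sum_mul_div_sum_mul_eq_one (hp : ∀ a, 0 ≤ p a) (hp1 : ∑ a, p a = 1) (hℓ : 0 < ℓ)
    (hL : ∀ a, ℓ ≤ L a) : ∑ a, p a * L a / ∑ b, p b * L b = 1 := by
  rw [← sum_div]
  exact div_self (hℓ.trans_le (le_sum_mul_of_le p L hp hp1 hL)).ne'

theorem div_mul_le_mul_div_sum_mul (hp : ∀ a, 0 ≤ p a) (hp1 : ∑ a, p a = 1) (hℓ : 0 < ℓ)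
    (hL : ∀ a, ℓ ≤ L a ∧ L a ≤ u) (a : α) :
    ℓ / u * p a ≤ p a * L a / ∑ b, p b * L b :=
  calc ℓ / u * p a = p a * ℓ / u := by ring
    _ ≤ p a * L a / ∑ b, p b * L b :=
      div_le_div₀ (mul_nonneg (hp a) (hℓ.le.trans (hL a).1))
        (mul_le_mul_of_nonneg_left (hL a).1 (hp a))
        (hℓ.trans_le (le_sum_mul_of_le p L hp hp1 fun b => (hL b).1))
        (sum_mul_le_of_le p L hp hp1 fun b => (hL b).2)

theorem div_mul_sum_le_sum_mul_div_sum_mul (hp : ∀ a, 0 ≤ p a) (hp1 : ∑ a, p a = 1)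
    (hℓ : 0 < ℓ) (hL : ∀ a, ℓ ≤ L a ∧ L a ≤ u) (s : Finset α) :
    ℓ / u * ∑ a ∈ s, p a ≤ ∑ a ∈ s, p a * L a / ∑ b, p b * L b := by
  rw [mul_sum]
  exact sum_le_sum fun a _ => div_mul_le_mul_div_sum_mul p L hp hp1 hℓ hL a

end Reweighting

theorem sum_mul_card_filter_le {α ι : Type*} [Fintype α] [Fintype ι] (q : α → ℝ)
    (P : ι → α → Prop) [∀ i a, Decidable (P i a)] (ε : ℝ)
    (hq : ∀ i, ∑ a with P i a, q a ≤ ε) :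
    ∑ a, q a * #{i | P i a} ≤ Fintype.card ι * ε := by
  simp_rw [card_filter, Nat.cast_sum, mul_sum, Nat.cast_ite, Nat.cast_one, Nat.cast_zero,
    mul_boole]
  rw [sum_comm]
  simpa [← sum_filter] using sum_le_sum fun i (_ : i ∈ univ) => hq i

theorem posterior_expected_transitions_upper_bound_general
    {S : Type*} [Fintype S] [DecidableEq S]
    (A : Matrix S S ℝ)
    (hoff : ∀ s t, s ≠ t → 0 ≤ A s t) (hrow : ∀ s, ∑ t, A s t = 0)
    (k₁ Ω : ℝ) (hk₁ : 1 < k₁) (hΩ : 0 < Ω) (hΩmax : ∀ s, k₁ * (-A s s) ≤ Ω)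
    (B : Matrix S S ℝ) (hB : B = 1 + Ω⁻¹ • A)
    (π₀ : S → ℝ) (hπ₀ : ∀ s, 0 ≤ π₀ s) (hπ₀1 : ∑ s, π₀ s = 1)
    (n : ℕ)
    (Prior : (Fin (n + 1) → S) → ℝ)
    (hPrior : ∀ v, Prior v = π₀ (v 0) * ∏ i : Fin n, B (v i.castSucc) (v i.succ))
    (L : (Fin (n + 1) → S) → ℝ) (ℓ u : ℝ) (hℓ : 0 < ℓ) (hℓu : ℓ ≤ u)
    (hL : ∀ v, ℓ ≤ L v ∧ L v ≤ u)
    (Post : (Fin (n + 1) → S) → ℝ)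
    (hPost : ∀ v, Post v = Prior v * L v / ∑ v', Prior v' * L v')
    (δ₁ : ℝ) (hδ₁ : δ₁ = ℓ / u * (1 - 1 / k₁)) :
    ∑ v : Fin (n + 1) → S,
        Post v *
          ((Finset.univ.filter (fun i : Fin n => v i.succ ≠ v i.castSucc)).card : ℝ) ≤
      (n : ℝ) * (1 - δ₁) := by
  have hc₀ : 0 ≤ 1 - 1 / k₁ := sub_nonneg.2 ((div_le_one (by linarith)).2 hk₁.le)
  have hBst : B ∈ rowStochastic ℝ S :=
    hB ▸ uniformization_mem_rowStochastic A hoff hrow hk₁.le hΩ hΩmax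
  have hBdiag (s : S) : 1 - 1 / k₁ ≤ B s s :=
    hB ▸ one_sub_one_div_le_uniformization_diag A (by linarith) hΩ (hΩmax s)
  obtain rfl : Prior = pathWeight π₀ (fun _ => B) := funext hPrior
  have hPrior0 : ∀ v, 0 ≤ pathWeight π₀ (fun _ : Fin n => B) v :=
    pathWeight_nonneg hπ₀ fun _ _ _ => nonneg_of_mem_rowStochastic hBst
  have hPrior1 : ∑ v, pathWeight π₀ (fun _ : Fin n => B) v = 1 :=
    (sum_pathWeight_of_mulVec_one π₀ _ fun _ => one_vecMul_of_mem_rowStochastic hBst).trans hπ₀1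
  have hPost1 : ∑ v, Post v = 1 := by
    simp_rw [hPost]
    exact sum_mul_div_sum_mul_eq_one _ L hPrior0 hPrior1 hℓ fun v => (hL v).1
  refine (sum_mul_card_filter_le Post _ (1 - δ₁) fun i => ?_).trans_eq (by simp)
  have hstay : δ₁ ≤ ∑ v with v i.succ = v i.castSucc, Post v :=
    calc δ₁ ≤ ℓ / u * ∑ v with v i.succ = v i.castSucc, pathWeight π₀ (fun _ => B) v := by
          rw [hδ₁]
          gcongr
          · exact div_nonneg hℓ.le (hℓ.le.trans hℓu)
          · simpa [hπ₀1] using mul_sum_le_sum_filter_pathWeight π₀ B _ hπ₀ hBst hc₀ hBdiag i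
      _ ≤ _ := by
          simp_rw [hPost]
          exact div_mul_sum_le_sum_mul_div_sum_mul _ L hPrior0 hPrior1 hℓ hL _
  linarith [sum_filter_add_sum_filter_not univ
    (fun v : Fin (n + 1) → S => v i.succ = v i.castSucc) Post]

/-- In the setting of the uniformized Markov prior over paths with likelihood
bounded in `[ℓ,u]`, setting `δ₁ = (ℓ/u)·(1 - 1/k₁)`, the posterior expected number of true
transitions (indices `i` with `v_{i+1} ≠ v_i`) is at most `n·(1 - δ₁)`. -/
theorem posterior_expected_transitions_upper_bound
    {S : Type*} [Fintype S] [DecidableEq S] [Nonempty S]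
    (A : Matrix S S ℝ)
    (hoff : ∀ s t, s ≠ t → 0 ≤ A s t) (hrow : ∀ s, ∑ t, A s t = 0)
    (k₁ Ω : ℝ) (hk₁ : 1 < k₁) (hΩ : 0 < Ω) (hΩmax : ∀ s, k₁ * (-A s s) ≤ Ω)
    (B : Matrix S S ℝ) (hB : B = 1 + Ω⁻¹ • A)
    (π₀ : S → ℝ) (hπ₀ : ∀ s, 0 ≤ π₀ s) (hπ₀1 : ∑ s, π₀ s = 1)
    (n : ℕ) (hn : 1 ≤ n)
    (Prior : (Fin (n + 1) → S) → ℝ)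
    (hPrior : ∀ v, Prior v = π₀ (v 0) * ∏ i : Fin n, B (v i.castSucc) (v i.succ))
    (L : (Fin (n + 1) → S) → ℝ) (ℓ u : ℝ) (hℓ : 0 < ℓ) (hℓu : ℓ ≤ u)
    (hL : ∀ v, ℓ ≤ L v ∧ L v ≤ u)
    (Post : (Fin (n + 1) → S) → ℝ)
    (hPost : ∀ v, Post v = Prior v * L v / ∑ v', Prior v' * L v')
    (δ₁ : ℝ) (hδ₁ : δ₁ = ℓ / u * (1 - 1 / k₁)) :
    ∑ v : Fin (n + 1) → S,
        Post v *
          ((Finset.univ.filter (fun i : Fin n => v i.succ ≠ v i.castSucc)).card : ℝ) ≤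
      (n : ℝ) * (1 - δ₁) :=
  posterior_expected_transitions_upper_bound_general A hoff hrow k₁ Ω hk₁ hΩ hΩmax B hB π₀ hπ₀ hπ₀1
    n Prior hPrior L ℓ u hℓ hℓu hL Post hPost δ₁ hδ₁
end
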